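/- arXiv:2310.15682 — 2 statements merged into one kernel-verified Lean document; each statement's English description precedes it below -/
import Mathlib

section
/- Let q be an odd prime power and T cyclic of order q²−1 with character group X(T), and let S ≤ T be the subgroup of order q−1. For fixed α ∈ X(S), the total number of characters Λ of T with Λ|_S = α equals q+1, of which exactly 2 are decomposable if α is a square in X(S) and 0 are decomposable otherwise; hence the number of indecomposable characters Λ of T with Λ|_S = α is q−1 or q+1 accordingly. -/
/-- In a finite cyclic group of order `a * b`, every element killed by `a` is a `b`-th power. -/
private lemma aux_pow_extract {G : Type*} [Group G] [Finite G] [IsCyclic G]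
    {a b : ℕ} (ha : a ≠ 0) (hcard : Nat.card G = a * b) {x : G} (hx : x ^ a = 1) :
    ∃ y : G, y ^ b = x := by
  obtain ⟨g, hg⟩ := IsCyclic.exists_generator (α := G)
  obtain ⟨i, hi0⟩ := mem_powers_iff_mem_zpowers.mpr (hg x)
  have hi : g ^ i = x := hi0
  have hord : orderOf g = a * b := by
    rw [orderOf_eq_card_of_forall_mem_zpowers hg, hcard]
  have hpow : g ^ (i * a) = 1 := by rw [pow_mul, hi, hx]
  have hdvd : a * b ∣ i * a := hord ▸ orderOf_dvd_of_pow_eq_one hpow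
  have hba : b ∣ i := by
    have : a * b ∣ a * i := by rwa [mul_comm i a] at hdvd
    exact (Nat.mul_dvd_mul_iff_left (Nat.pos_of_ne_zero ha)).mp this
  obtain ⟨j, rfl⟩ := hba
  exact ⟨g ^ j, by rw [← pow_mul, mul_comm j b, hi]⟩

/-- The restriction homomorphism on character groups. -/
private def resHom {T : Type} [CommGroup T] (S : Subgroup T) :
    (T →* ℂˣ) →* (S →* ℂˣ) where
  toFun Λ := Λ.comp S.subtype
  map_one' := rfl
  map_mul' _ _ := rfl


private lemma aux_res_inv_mul {X Y : Type*} [CommGroup X] [CommGroup Y] (f : X →* Y)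
    {a b : X} {α : Y} (ha : f a = α) (hb : f b = α) : f (a⁻¹ * b) = 1 := by
  rw [map_mul, map_inv, ha, hb, inv_mul_cancel]

private lemma aux_res_mul {X Y : Type*} [CommGroup X] [CommGroup Y] (f : X →* Y)
    {a c : X} {α : Y} (ha : f a = α) (hc : f c = 1) : f (a * c) = α := by
  rw [map_mul, ha, hc, mul_one]

private lemma aux_inv_mul_pow {X : Type*} [CommGroup X] {a b : X} {n : ℕ}
    (ha : a ^ n = 1) (hb : b ^ n = 1) : (a⁻¹ * b) ^ n = 1 := by
  rw [mul_pow, inv_pow, ha, hb, inv_one, one_mul]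

private lemma aux_mul_pow {X : Type*} [CommGroup X] {a c : X} {n : ℕ}
    (ha : a ^ n = 1) (hc : c ^ n = 1) : (a * c) ^ n = 1 := by
  rw [mul_pow, ha, hc, mul_one]

private lemma aux_key {X Y : Type*} [CommGroup X] [CommGroup Y] (f : X →* Y) {Δ : X}
    {m k : ℕ} (hmk : k = 2 + m) (hb : (f Δ) ^ m = 1) : (f Δ) ^ 2 = f (Δ ^ k) := by
  rw [map_pow, hmk, pow_add, hb, mul_one]

private lemma aux_res0 {X Y : Type*} [CommGroup X] [CommGroup Y] (f : X →* Y) {Δ : X}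
    {β α : Y} {m k : ℕ} (hmk : k = 2 + m) (hΔ : f Δ = β) (hb : β ^ m = 1) (hβ : β ^ 2 = α) :
    f (Δ ^ k) = α := by
  rw [map_pow, hΔ, hmk, pow_add, hb, mul_one, hβ]

private lemma aux_tor {X : Type*} [CommGroup X] [Finite X] {Δ : X} {m k n : ℕ}
    (h : n = k * m) (hn : Nat.card X = n) : (Δ ^ k) ^ m = 1 := by
  rw [← pow_mul, ← h, ← hn]
  exact pow_card_eq_one'

/- Let `T` be cyclic of order `q² - 1` and `S ≤ T` its subgroup of order `q - 1`. For a fixed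
character `α` of `S`, there are exactly `q + 1` characters of `T` restricting to `α`; among them
exactly `2` are decomposable if `α` is a square in the character group of `S` and `0` otherwise;
hence the number of indecomposable extensions is `q - 1` or `q + 1` accordingly. -/
open Classical in
theorem stmt9 (q : ℕ) (hq : IsPrimePow q) (hodd : Odd q)
    (T : Type) [CommGroup T] [IsCyclic T] (hT : Nat.card T = q ^ 2 - 1)
    (S : Subgroup T) (hS : Nat.card S = q - 1)
    (α : S →* ℂˣ) :
    Set.ncard {Λ : T →* ℂˣ | Λ.comp S.subtype = α} = q + 1 ∧
      Set.ncard {Λ : T →* ℂˣ | Λ.comp S.subtype = α ∧ Λ ^ (q - 1) = 1} =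
        (if ∃ β : S →* ℂˣ, β ^ 2 = α then 2 else 0) ∧
      Set.ncard {Λ : T →* ℂˣ | Λ.comp S.subtype = α ∧ Λ ^ (q - 1) ≠ 1} =
        (if ∃ β : S →* ℂˣ, β ^ 2 = α then q - 1 else q + 1) := by
  -- numerics
  have hq2 : 2 ≤ q := hq.two_le
  have hq3 : 3 ≤ q := by
    rcases hodd with ⟨t, ht⟩; omega
  have h2m : 2 ∣ q - 1 := by rcases hodd with ⟨t, ht⟩; omega
  have h2k : 2 ∣ q + 1 := by rcases hodd with ⟨t, ht⟩; omega
  have hfact : q ^ 2 - 1 = (q - 1) * (q + 1) := by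
    obtain ⟨r, rfl⟩ := Nat.exists_eq_add_of_le hq3
    have h1 : 3 + r - 1 = 2 + r := by omega
    have h2 : (3 + r) ^ 2 = (2 + r) * (3 + r + 1) + 1 := by ring
    rw [h1]; omega
  have hn0 : q ^ 2 - 1 ≠ 0 := by
    have : 2 * 2 ≤ q * q := Nat.mul_le_mul hq2 hq2
    rw [pow_two]; omega
  -- finiteness and character group of `T`
  haveI hTfin : Finite T := Nat.finite_of_card_ne_zero (by rw [hT]; exact hn0)
  haveI : NeZero ((Nat.card T : ℂ)) := ⟨by rw [hT]; exact_mod_cast hn0⟩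
  obtain ⟨eT⟩ := IsCyclic.monoidHom_equiv_self T ℂ
  haveI : Finite (T →* ℂˣ) := Finite.of_equiv T eT.symm.toEquiv
  have cardX : Nat.card (T →* ℂˣ) = q ^ 2 - 1 := by rw [Nat.card_congr eT.toEquiv, hT]
  haveI : IsCyclic (T →* ℂˣ) := isCyclic_of_surjective eT.symm eT.symm.surjective
  -- character group of `S`
  haveI : NeZero ((Nat.card S : ℂ)) :=
    ⟨by rw [hS]; exact_mod_cast (by omega : q - 1 ≠ 0)⟩
  obtain ⟨eS⟩ := IsCyclic.monoidHom_equiv_self S ℂ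
  haveI : Finite (S →* ℂˣ) := Finite.of_equiv S eS.symm.toEquiv
  have cardY : Nat.card (S →* ℂˣ) = q - 1 := by rw [Nat.card_congr eS.toEquiv, hS]
  -- the quotient `T ⧸ S` and its character group
  haveI : IsCyclic (T ⧸ S) :=
    isCyclic_of_surjective (QuotientGroup.mk' S) (QuotientGroup.mk'_surjective S)
  have cardQ : Nat.card (T ⧸ S) = q + 1 := by
    have h := Subgroup.card_eq_card_quotient_mul_card_subgroup S
    rw [hT, hS, hfact, mul_comm (q - 1) (q + 1)] at h
    exact (Nat.eq_of_mul_eq_mul_right (by omega) h.symm)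
  haveI : NeZero ((Nat.card (T ⧸ S) : ℂ)) :=
    ⟨by rw [cardQ]; exact_mod_cast (by omega : q + 1 ≠ 0)⟩
  obtain ⟨eQ⟩ := IsCyclic.monoidHom_equiv_self (T ⧸ S) ℂ
  have cardXQ : Nat.card ((T ⧸ S) →* ℂˣ) = q + 1 := by
    rw [Nat.card_congr eQ.toEquiv, cardQ]
  set res : (T →* ℂˣ) →* (S →* ℂˣ) := resHom S with hres
  -- the kernel of restriction is in bijection with characters of the quotient
  have card_ker : Nat.card (MonoidHom.ker res) = q + 1 := by
    have hSle : ∀ Λ : T →* ℂˣ, Λ ∈ MonoidHom.ker res → S ≤ MonoidHom.ker Λ := by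
      intro Λ hΛ x hx
      have : Λ.comp S.subtype = 1 := hΛ
      have := DFunLike.congr_fun this ⟨x, hx⟩
      simpa using this
    let toKer : ((T ⧸ S) →* ℂˣ) → (MonoidHom.ker res) := fun φ =>
      ⟨φ.comp (QuotientGroup.mk' S), by
        show (φ.comp (QuotientGroup.mk' S)).comp S.subtype = 1
        refine MonoidHom.ext fun s => ?_
        show φ (QuotientGroup.mk' S (S.subtype s)) = 1
        have h1 : QuotientGroup.mk' S (S.subtype s) = 1 :=
          (QuotientGroup.eq_one_iff _).mpr s.2
        rw [h1]
        exact map_one φ⟩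
    have hbij : Function.Bijective toKer := by
      constructor
      · intro φ φ' h
        have h' : φ.comp (QuotientGroup.mk' S) = φ'.comp (QuotientGroup.mk' S) :=
          congrArg Subtype.val h
        exact (MonoidHom.cancel_right (QuotientGroup.mk'_surjective S)).mp h'
      · rintro ⟨Λ, hΛ⟩
        refine ⟨QuotientGroup.lift S Λ (hSle Λ hΛ), ?_⟩
        apply Subtype.ext
        refine MonoidHom.ext fun x => ?_
        exact QuotientGroup.lift_mk' S (hSle Λ hΛ) x
    rw [← Nat.card_congr (Equiv.ofBijective toKer hbij), cardXQ]
  -- surjectivity of restriction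
  have hres_surj : Function.Surjective res := by
    rw [← MonoidHom.range_eq_top]
    apply Subgroup.eq_top_of_card_eq
    have h := Subgroup.card_eq_card_quotient_mul_card_subgroup (MonoidHom.ker res)
    rw [cardX, card_ker,
      Nat.card_congr (QuotientGroup.quotientKerEquivRange res).toEquiv, hfact] at h
    rw [cardY]
    exact Nat.eq_of_mul_eq_mul_right (by omega) h.symm
  -- every `(q-1)`-torsion character restricts to a square
  have key : ∀ Λ : T →* ℂˣ, Λ ^ (q - 1) = 1 → ∃ β : S →* ℂˣ, β ^ 2 = res Λ := by
    intro Λ h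
    obtain ⟨Δ, hΔ⟩ := aux_pow_extract (a := q - 1) (b := q + 1)
      (by omega) (by rw [cardX, hfact]) h
    have hb : (res Δ) ^ (q - 1) = 1 := by rw [← cardY]; exact pow_card_eq_one' (G := S →* ℂˣ)
    refine ⟨res Δ, ?_⟩
    exact (aux_key res (show q + 1 = 2 + (q - 1) by omega) hb).trans (congrArg res hΔ)
  -- characterization of decomposable characters in the kernel
  have E_iff : ∀ c : T →* ℂˣ, (res c = 1 ∧ c ^ (q - 1) = 1) ↔ c ^ 2 = 1 := by
    intro c
    constructor
    · rintro ⟨h1, h2⟩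
      have hk : orderOf c ∣ q + 1 := by
        rw [← card_ker]
        have : orderOf (⟨c, h1⟩ : MonoidHom.ker res) = orderOf c :=
          Subgroup.orderOf_mk c h1
        rw [← this]; exact orderOf_dvd_natCard _
      have hm : orderOf c ∣ q - 1 := orderOf_dvd_of_pow_eq_one h2
      have hgcd : Nat.gcd (q + 1) (q - 1) = 2 := by
        rw [show q + 1 = 2 + (q - 1) by omega, Nat.gcd_add_self_left]
        exact Nat.gcd_eq_left h2m
      have : orderOf c ∣ 2 := hgcd ▸ Nat.dvd_gcd hk hm
      exact orderOf_dvd_iff_pow_eq_one.mp this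
    · intro h2
      have hdvd : orderOf c ∣ 2 := orderOf_dvd_of_pow_eq_one h2
      refine ⟨?_, orderOf_dvd_iff_pow_eq_one.mp (hdvd.trans h2m)⟩
      have hck : c ^ (q + 1) = 1 := orderOf_dvd_iff_pow_eq_one.mp (hdvd.trans h2k)
      obtain ⟨Δ, hΔ⟩ := aux_pow_extract (a := q + 1) (b := q - 1)
        (by omega) (by rw [cardX, hfact, mul_comm]) hck
      calc res c = res (Δ ^ (q - 1)) := congrArg res hΔ.symm
        _ = (res Δ) ^ (q - 1) := map_pow res Δ (q - 1)
        _ = 1 := by rw [← cardY]; exact pow_card_eq_one' (G := S →* ℂˣ)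
  -- the 2-torsion subgroup of the character group of `T` has exactly 2 elements
  set sq : (T →* ℂˣ) →* (T →* ℂˣ) := MonoidHom.mk' (fun Λ => Λ ^ 2) (fun a b => mul_pow a b 2)
    with hsq_def
  have cardE : Nat.card (MonoidHom.ker sq) = 2 := by
    set E := MonoidHom.ker sq with hE
    have hdvd2 : Nat.card E ∣ 2 := by
      rw [← IsCyclic.exponent_eq_card]
      refine Monoid.exponent_dvd_of_forall_pow_eq_one fun g => ?_
      exact Subtype.ext g.2
    have h2dvd : 2 ∣ Nat.card E := by
      haveI : Fintype (T →* ℂˣ) := Fintype.ofFinite _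
      haveI : Fact (Nat.Prime 2) := ⟨Nat.prime_two⟩
      obtain ⟨ι, hι⟩ := exists_prime_orderOf_dvd_card (G := T →* ℂˣ) 2
        (by rw [← Nat.card_eq_fintype_card, cardX, hfact]
            exact Dvd.dvd.mul_right h2m _)
      have hmem : ι ∈ E := by
        show ι ^ 2 = 1
        rw [← hι]; exact pow_orderOf_eq_one ι
      have : orderOf (⟨ι, hmem⟩ : E) = 2 := by rw [Subgroup.orderOf_mk, hι]
      rw [← this]; exact orderOf_dvd_natCard _
    exact Nat.dvd_antisymm hdvd2 h2dvd
  -- injectivity of left multiplication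
  have hinj : ∀ Λ₀ : T →* ℂˣ, Function.Injective (fun c : T →* ℂˣ => Λ₀ * c) := by
    intro Λ₀ x y h
    exact (inv_mul_cancel_left Λ₀ x).symm.trans
      ((congrArg (fun z => Λ₀⁻¹ * z) h).trans (inv_mul_cancel_left Λ₀ y))
  -- the fiber of the restriction over α
  obtain ⟨Λα, hΛα⟩ := hres_surj α
  have fiber_eq : {Λ : T →* ℂˣ | Λ.comp S.subtype = α} =
      (fun c => Λα * c) '' (MonoidHom.ker res : Set (T →* ℂˣ)) := by
    ext Λ
    simp only [Set.mem_setOf_eq, Set.mem_image, SetLike.mem_coe, MonoidHom.mem_ker]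
    constructor
    · intro h
      have h' : res Λ = α := h
      refine ⟨Λα⁻¹ * Λ, ?_, mul_inv_cancel_left Λα Λ⟩
      exact aux_res_inv_mul res hΛα h'
    · rintro ⟨c, hc, rfl⟩
      show res (Λα * c) = α
      exact aux_res_mul res hΛα hc
  have count1 : Set.ncard {Λ : T →* ℂˣ | Λ.comp S.subtype = α} = q + 1 := by
    rw [fiber_eq, Set.ncard_image_of_injective _ (hinj Λα)]
    rw [← Nat.card_coe_set_eq]
    simpa using card_ker
  refine ⟨count1, ?_⟩
  by_cases hsq : ∃ β : S →* ℂˣ, β ^ 2 = α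
  · -- α is a square: exactly 2 decomposable extensions
    obtain ⟨β, hβ⟩ := hsq
    obtain ⟨Δ, hΔ⟩ := hres_surj β
    obtain ⟨Λ₀, hΛ₀⟩ : ∃ L : T →* ℂˣ, L = Δ ^ (q + 1) := ⟨_, rfl⟩
    have hbβ : β ^ (q - 1) = 1 := by rw [← cardY]; exact pow_card_eq_one' (G := S →* ℂˣ)
    have hres₀ : res Λ₀ = α := (congrArg res hΛ₀).trans
      (aux_res0 res (show q + 1 = 2 + (q - 1) by omega) hΔ hbβ hβ)
    have htor₀ : Λ₀ ^ (q - 1) = 1 := by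
      rw [hΛ₀]
      exact aux_tor (hfact.trans (Nat.mul_comm _ _)) cardX
    have dec_eq : {Λ : T →* ℂˣ | Λ.comp S.subtype = α ∧ Λ ^ (q - 1) = 1} =
        (fun c => Λ₀ * c) '' (MonoidHom.ker sq : Set (T →* ℂˣ)) := by
      ext Λ
      simp only [Set.mem_setOf_eq, Set.mem_image, SetLike.mem_coe, MonoidHom.mem_ker]
      constructor
      · rintro ⟨h1, h2⟩
        have h1' : res Λ = α := h1
        refine ⟨Λ₀⁻¹ * Λ, ?_, mul_inv_cancel_left Λ₀ Λ⟩
        show (Λ₀⁻¹ * Λ) ^ 2 = 1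
        refine (E_iff _).mp ⟨?_, ?_⟩
        · exact aux_res_inv_mul res hres₀ h1'
        · exact aux_inv_mul_pow (X := T →* ℂˣ) htor₀ h2
      · rintro ⟨c, hc, rfl⟩
        have hc2 : c ^ 2 = 1 := hc
        obtain ⟨hcres, hctor⟩ := (E_iff c).mpr hc2
        constructor
        · show res (Λ₀ * c) = α
          exact aux_res_mul res hres₀ hcres
        · exact aux_mul_pow (X := T →* ℂˣ) htor₀ hctor
    have count2 : Set.ncard {Λ : T →* ℂˣ | Λ.comp S.subtype = α ∧ Λ ^ (q - 1) = 1} = 2 := by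
      rw [dec_eq, Set.ncard_image_of_injective _ (hinj Λ₀)]
      rw [← Nat.card_coe_set_eq]
      simpa using cardE
    have count3 :
        Set.ncard {Λ : T →* ℂˣ | Λ.comp S.subtype = α ∧ Λ ^ (q - 1) ≠ 1} = q - 1 := by
      have hsplit : {Λ : T →* ℂˣ | Λ.comp S.subtype = α ∧ Λ ^ (q - 1) ≠ 1} =
          {Λ : T →* ℂˣ | Λ.comp S.subtype = α} \
            {Λ : T →* ℂˣ | Λ.comp S.subtype = α ∧ Λ ^ (q - 1) = 1} := by
        ext Λ; simp only [Set.mem_setOf_eq, Set.mem_diff]; tauto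
      rw [hsplit, Set.ncard_diff (fun Λ hΛ => hΛ.1) (Set.toFinite _), count1, count2]
      omega
    rw [if_pos ⟨β, hβ⟩, if_pos ⟨β, hβ⟩]
    exact ⟨count2, count3⟩
  · -- α is not a square: no decomposable extensions
    have dec_empty : {Λ : T →* ℂˣ | Λ.comp S.subtype = α ∧ Λ ^ (q - 1) = 1} = ∅ := by
      ext Λ
      simp only [Set.mem_setOf_eq, Set.mem_empty_iff_false, iff_false, not_and]
      intro h1 h2
      obtain ⟨β, hβ⟩ := key Λ h2
      exact hsq ⟨β, by rw [hβ]; exact h1⟩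
    have count2 : Set.ncard {Λ : T →* ℂˣ | Λ.comp S.subtype = α ∧ Λ ^ (q - 1) = 1} = 0 := by
      rw [dec_empty, Set.ncard_empty]
    have count3 :
        Set.ncard {Λ : T →* ℂˣ | Λ.comp S.subtype = α ∧ Λ ^ (q - 1) ≠ 1} = q + 1 := by
      have hsplit : {Λ : T →* ℂˣ | Λ.comp S.subtype = α ∧ Λ ^ (q - 1) ≠ 1} =
          {Λ : T →* ℂˣ | Λ.comp S.subtype = α} := by
        ext Λ
        simp only [Set.mem_setOf_eq, and_iff_left_iff_imp]
        intro h1 h2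
        obtain ⟨β, hβ⟩ := key Λ h2
        exact hsq ⟨β, by rw [hβ]; exact h1⟩
      rw [hsplit, count1]
    rw [if_neg hsq, if_neg hsq]
    exact ⟨count2, count3⟩
end

section
/- Let T be a cyclic group of order q²−1 (q an odd prime power). Suppose Λ, Φ, Λ', Φ' are indecomposable characters of T satisfying Λ'Φ'^q = ΛΦ^q and Λ'Φ' = Λ^qΦ^q. Then Φ'^qΛ^{-1} is decomposable, and Λ'Φ^{-q} = (Φ'^qΛ^{-1})^{-1}. -/
/-!
Dividing the two relations gives `Φ'^q Λ^q = Φ' Λ`. Raising `x := Φ'^q Λ⁻¹` to the `q`-th power and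
substituting this relation once gives `x^q = Φ'^q Λ^{-q²}`, and `Λ^{q²} = Λ` because
`Λ^{q²-1} = 1` on a group of order `q² - 1`. So `x^q = x`, i.e. `x^{q-1} = 1`.
The second claim is the first relation rearranged.
-/

theorem MonoidHom.pow_natCard_eq_one {G M : Type*} [Group G] [CommMonoid M] (f : G →* M) :
    f ^ Nat.card G = 1 := by
  ext g
  simp [← map_pow, pow_card_eq_one']

section CommGroup

variable {G : Type*} [CommGroup G]

theorem pow_pred_eq_one_of_pow_eq_self {x : G} {n : ℕ} (h : x ^ n = x) : x ^ (n - 1) = 1 := by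
  rcases n with _ | n
  · exact pow_zero x
  · rwa [pow_succ, mul_eq_right] at h

variable {q : ℕ} {a b a' b' : G}

theorem pow_mul_pow_eq_mul_of_relations (e1 : a' * b' ^ q = a * b ^ q)
    (e2 : a' * b' = a ^ q * b ^ q) : b' ^ q * a ^ q = b' * a := by
  rw [eq_inv_mul_of_mul_eq e1, eq_inv_mul_of_mul_eq e2]
  ac_rfl

theorem pow_mul_inv_pow_eq_self_of_relations (ha : a ^ q ^ 2 = a)
    (e1 : a' * b' ^ q = a * b ^ q) (e2 : a' * b' = a ^ q * b ^ q) :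
    (b' ^ q * a⁻¹) ^ q = b' ^ q * a⁻¹ := by
  calc (b' ^ q * a⁻¹) ^ q = (b' ^ q) ^ q * (a ^ q)⁻¹ := by rw [mul_pow, inv_pow]
    _ = (b' ^ q * a ^ q) ^ q * (a ^ q ^ 2)⁻¹ * (a ^ q)⁻¹ := by
        rw [mul_pow, sq, pow_mul, mul_inv_cancel_right]
    _ = (b' * a) ^ q * a⁻¹ * (a ^ q)⁻¹ := by rw [pow_mul_pow_eq_mul_of_relations e1 e2, ha]
    _ = b' ^ q * a⁻¹ := by rw [mul_pow, mul_right_comm (b' ^ q * a ^ q), mul_inv_cancel_right]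

theorem mul_inv_pow_eq_inv_of_relation (e1 : a' * b' ^ q = a * b ^ q) :
    a' * (b ^ q)⁻¹ = (b' ^ q * a⁻¹)⁻¹ := by
  rw [mul_inv_rev, inv_inv, ← div_eq_mul_inv, ← div_eq_mul_inv, div_eq_div_iff_mul_eq_mul, e1]

end CommGroup

theorem stmt17_general (q : ℕ) (hodd : Odd q)
    (T : Type) [CommGroup T] (hT : Nat.card T = q ^ 2 - 1)
    (Λ Φ Λ' Φ' : T →* ℂˣ)
    (e1 : Λ' * Φ' ^ q = Λ * Φ ^ q) (e2 : Λ' * Φ' = Λ ^ q * Φ ^ q) :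
    (Φ' ^ q * Λ⁻¹) ^ (q - 1) = 1 ∧ Λ' * (Φ ^ q)⁻¹ = (Φ' ^ q * Λ⁻¹)⁻¹ := by
  have hΛq : Λ ^ q ^ 2 = Λ :=
    calc Λ ^ q ^ 2 = Λ ^ (q ^ 2 - 1) * Λ := (pow_sub_one_mul (pow_ne_zero 2 hodd.pos.ne') Λ).symm
      _ = Λ := by rw [← hT, Λ.pow_natCard_eq_one]; exact one_mul Λ
  exact ⟨pow_pred_eq_one_of_pow_eq_self
      (pow_mul_inv_pow_eq_self_of_relations (G := T →* ℂˣ) hΛq e1 e2),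
    mul_inv_pow_eq_inv_of_relation (G := T →* ℂˣ) e1⟩

/-- If `Λ, Φ, Λ', Φ'` are indecomposable characters of a cyclic group of order `q² - 1` with
`Λ'Φ'^q = ΛΦ^q` and `Λ'Φ' = Λ^qΦ^q`, then `Φ'^qΛ⁻¹` is decomposable and
`Λ'Φ^{-q} = (Φ'^qΛ⁻¹)⁻¹`. -/
theorem stmt17 (q : ℕ) (hq : IsPrimePow q) (hodd : Odd q)
    (T : Type) [CommGroup T] [IsCyclic T] (hT : Nat.card T = q ^ 2 - 1)
    (Λ Φ Λ' Φ' : T →* ℂˣ)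
    (hΛ : Λ ^ (q - 1) ≠ 1) (hΦ : Φ ^ (q - 1) ≠ 1)
    (hΛ' : Λ' ^ (q - 1) ≠ 1) (hΦ' : Φ' ^ (q - 1) ≠ 1)
    (e1 : Λ' * Φ' ^ q = Λ * Φ ^ q) (e2 : Λ' * Φ' = Λ ^ q * Φ ^ q) :
    (Φ' ^ q * Λ⁻¹) ^ (q - 1) = 1 ∧ Λ' * (Φ ^ q)⁻¹ = (Φ' ^ q * Λ⁻¹)⁻¹ :=
  stmt17_general q hodd T hT Λ Φ Λ' Φ' e1 e2
end
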